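/- arXiv:2205.15905 — 2 statements merged into one kernel-verified Lean document; each statement's English description precedes it below -/
import Mathlib

section
/- Let θ, λ, f, h > 0, B ∈ R^n, σ ∈ R^{n×d} with Σ = σσᵀ positive definite, and let Π ⊆ R^n be a nonempty closed convex cone with image cone Π_σ = {σᵀπ : π ∈ Π}. Set ξ = σᵀΣ⁻¹B and let ξ_c be the projection of ξ onto Π_σ. Then the maximizer over π ∈ Π of F(π) := h·πᵀB − (θh²)/(2λf)·πᵀΣπ is π* = (λf)/(θh)·Σ⁻¹σξ_c, and the maximum value is (λf)/(2θ)·‖ξ_c‖². -/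
/-!
On a convex cone `C`, the nearest point `ξc` to `ξ` satisfies `⟪ξ - ξc, v⟫ ≤ 0` for every
`v ∈ C` with equality at `v = ξc` (test the variational inequality at `0` and `2 • ξc`).
Hence, for `h > 0`, on `C` the objective `h⟪v, ξ⟫ - c‖v‖²` lies below `h⟪v, ξc⟫ - c‖v‖²`,
the two agree on the ray through `ξc`, and completing the square shows that the latter is
maximized over the whole space at `(h / 2c) • ξc`, which lies in `C`.
-/

open RealInnerProductSpace

variable {E : Type*} [NormedAddCommGroup E] [InnerProductSpace ℝ E]

section Cone

variable {C : Set E} {ξ ξc : E}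

theorem real_inner_sub_le_zero_of_forall_norm_sub_le (hconv : Convex ℝ C) (hmem : ξc ∈ C)
    (hmin : ∀ v ∈ C, ‖ξ - ξc‖ ≤ ‖ξ - v‖) : ∀ v ∈ C, ⟪ξ - ξc, v - ξc⟫ ≤ 0 := by
  have : Nonempty C := ⟨⟨ξc, hmem⟩⟩
  refine (norm_eq_iInf_iff_real_inner_le_zero hconv hmem).mp ?_
  exact (ciInf_eq_of_forall_ge_of_forall_gt_exists_lt (fun w : C => hmin w w.2)
    fun _ hw => ⟨⟨ξc, hmem⟩, hw⟩).symm

variable (hcone : ∀ k : ℝ, 0 ≤ k → ∀ v ∈ C, k • v ∈ C) (hmem : ξc ∈ C)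
  (hvi : ∀ v ∈ C, ⟪ξ - ξc, v - ξc⟫ ≤ 0)
include hcone hmem hvi

theorem real_inner_sub_self_eq_zero_of_cone : ⟪ξ - ξc, ξc⟫ = 0 := by
  have at_double := hvi _ (hcone 2 zero_le_two ξc hmem)
  have at_zero := hvi _ (zero_smul ℝ ξc ▸ hcone 0 le_rfl ξc hmem)
  rw [two_smul, add_sub_cancel_right] at at_double
  rw [zero_sub, inner_neg_right] at at_zero
  linarith

theorem real_inner_sub_le_zero_of_cone : ∀ v ∈ C, ⟪ξ - ξc, v⟫ ≤ 0 := by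
  intro v hv
  have := hvi v hv
  rwa [inner_sub_right, real_inner_sub_self_eq_zero_of_cone hcone hmem hvi, sub_zero] at this

end Cone

theorem mul_real_inner_sub_mul_norm_sq_le {a : ℝ} (ha : 0 < a) (b : ℝ) (v y : E) :
    b * ⟪v, y⟫ - a * ‖v‖ ^ 2 ≤ b ^ 2 / (4 * a) * ‖y‖ ^ 2 := by
  have hsq : 0 ≤ ‖(2 * a) • v - b • y‖ ^ 2 := sq_nonneg _
  rw [norm_sub_sq_real, norm_smul, norm_smul, real_inner_smul_left, real_inner_smul_right,
    Real.norm_eq_abs, Real.norm_eq_abs, mul_pow, mul_pow, sq_abs, sq_abs] at hsq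
  rw [div_mul_eq_mul_div, le_div_iff₀ (by positivity)]
  nlinarith

theorem mul_real_inner_smul_sub_mul_norm_sq {a : ℝ} (ha : a ≠ 0) (b : ℝ) (y : E) :
    b * ⟪(b / (2 * a)) • y, y⟫ - a * ‖(b / (2 * a)) • y‖ ^ 2 = b ^ 2 / (4 * a) * ‖y‖ ^ 2 := by
  rw [real_inner_smul_left, real_inner_self_eq_norm_sq, norm_smul, mul_pow, Real.norm_eq_abs,
    sq_abs]
  field_simp
  ring

theorem hjbi_outer_maximization_general {d : ℕ} (lam θ f h : ℝ)
    (hlam : 0 < lam) (hθ : 0 < θ) (hf : 0 < f) (hh : 0 < h)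
    (C : Set (EuclideanSpace ℝ (Fin d)))
    (hC_convex : Convex ℝ C)
    (hC_cone : ∀ k : ℝ, 0 ≤ k → ∀ v ∈ C, k • v ∈ C)
    (ξ ξc : EuclideanSpace ℝ (Fin d)) (hmem : ξc ∈ C)
    (hmin : ∀ v ∈ C, ‖ξ - ξc‖ ≤ ‖ξ - v‖) :
    let G : EuclideanSpace ℝ (Fin d) → ℝ :=
      fun v => h * ⟪v, ξ⟫ - (θ * h ^ 2) / (2 * lam * f) * ‖v‖ ^ 2
    let vstar : EuclideanSpace ℝ (Fin d) := ((lam * f) / (θ * h)) • ξc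
    vstar ∈ C ∧ (∀ v ∈ C, G v ≤ G vstar) ∧
      G vstar = (lam * f) / (2 * θ) * ‖ξc‖ ^ 2 := by
  intro G vstar
  set c := (θ * h ^ 2) / (2 * lam * f) with hc_def
  have hc : 0 < c := by positivity
  have hvstar : vstar = (h / (2 * c)) • ξc := by
    show (lam * f / (θ * h)) • ξc = _
    rw [hc_def]; congr 1; field_simp
  have hvalue : h ^ 2 / (4 * c) = (lam * f) / (2 * θ) := by rw [hc_def]; field_simp; ring
  have hvi := real_inner_sub_le_zero_of_forall_norm_sub_le hC_convex hmem hmin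
  have hle := real_inner_sub_le_zero_of_cone hC_cone hmem hvi
  have hperp := real_inner_sub_self_eq_zero_of_cone hC_cone hmem hvi
  have hreduce (v : EuclideanSpace ℝ (Fin d)) :
      G v = h * ⟪v, ξc⟫ - c * ‖v‖ ^ 2 + h * ⟪ξ - ξc, v⟫ := by
    show h * ⟪v, ξ⟫ - c * ‖v‖ ^ 2 = _
    rw [inner_sub_left, real_inner_comm ξ, real_inner_comm ξc]; ring
  have hGstar : G vstar = (lam * f) / (2 * θ) * ‖ξc‖ ^ 2 := by
    rw [hreduce, hvstar, inner_smul_right, hperp, mul_zero, mul_zero, add_zero,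
      mul_real_inner_smul_sub_mul_norm_sq hc.ne', hvalue]
  refine ⟨hC_cone _ (by positivity) ξc hmem, fun v hv => ?_, hGstar⟩
  calc G v ≤ h * ⟪v, ξc⟫ - c * ‖v‖ ^ 2 := by
        rw [hreduce]
        exact add_le_of_nonpos_right (mul_nonpos_of_nonneg_of_nonpos hh.le (hle v hv))
    _ ≤ h ^ 2 / (4 * c) * ‖ξc‖ ^ 2 := mul_real_inner_sub_mul_norm_sq_le hc h v ξc
    _ = G vstar := by rw [hGstar, hvalue]

/-- Outer maximization of the HJBI equation (reduced form in `v = σᵀπ ∈ Π_σ`):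
    the maximizer over the cone `C = Π_σ` of `G(v) = h⟪v,ξ⟫ - (θh²)/(2λf)‖v‖²`
    is `v* = (λf)/(θh) ξc` where `ξc = Proj_C ξ`, with maximum value
    `(λf)/(2θ) ‖ξc‖²`. -/
theorem hjbi_outer_maximization {d : ℕ} (lam θ f h : ℝ)
    (hlam : 0 < lam) (hθ : 0 < θ) (hf : 0 < f) (hh : 0 < h)
    (C : Set (EuclideanSpace ℝ (Fin d))) (hC_ne : C.Nonempty)
    (hC_closed : IsClosed C) (hC_convex : Convex ℝ C)
    (hC_cone : ∀ k : ℝ, 0 ≤ k → ∀ v ∈ C, k • v ∈ C)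
    (hC_zero : (0 : EuclideanSpace ℝ (Fin d)) ∈ C)
    (ξ ξc : EuclideanSpace ℝ (Fin d)) (hmem : ξc ∈ C)
    (hmin : ∀ v ∈ C, ‖ξ - ξc‖ ≤ ‖ξ - v‖) :
    let G : EuclideanSpace ℝ (Fin d) → ℝ :=
      fun v => h * ⟪v, ξ⟫ - (θ * h ^ 2) / (2 * lam * f) * ‖v‖ ^ 2
    let vstar : EuclideanSpace ℝ (Fin d) := ((lam * f) / (θ * h)) • ξc
    vstar ∈ C ∧ (∀ v ∈ C, G v ≤ G vstar) ∧
      G vstar = (lam * f) / (2 * θ) * ‖ξc‖ ^ 2 :=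
  hjbi_outer_maximization_general lam θ f h hlam hθ hf hh C hC_convex hC_cone ξ ξc hmem hmin
end

section
/- Let θ > 0 and X ∈ L²(P). If X − E[X] ≤ 1/θ almost surely (i.e., X lies in the monotone region G_θ), then for the probability measure Q with density dQ/dP = 1 − θ(X − E[X]) (which is nonnegative and integrates to 1), the MMV objective evaluated at Q equals the MV value: E^Q[X + (1/(2θ))(dQ/dP − 1)] = E[X] − (θ/2)·Var(X). -/
/-! With `Y = X - E[X]` the density is `Z = 1 - θY`, and the MMV integrand expands to
`E[X] + (1/2 - θE[X]) Y - (θ/2) Y²`. Since `E[Y] = 0` and `E[Y²] = Var X`, only `E[X]` and the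
quadratic term survive integration. -/

open MeasureTheory ProbabilityTheory

section

variable {Ω : Type*} [MeasurableSpace Ω] {μ : Measure Ω}

lemma integral_sub_integral_eq_zero [IsZeroOrProbabilityMeasure μ] (X : Ω → ℝ) :
    ∫ ω, (X ω - μ[X]) ∂μ = 0 := by
  simpa [centralMoment] using centralMoment_one (X := X) (μ := μ)

lemma integral_add_mul_centered_add_mul_sq [IsProbabilityMeasure μ] {X : Ω → ℝ}
    (hX : MemLp X 2 μ) (a b c : ℝ) :
    ∫ ω, (a + b * (X ω - μ[X]) + c * (X ω - μ[X]) ^ 2) ∂μ = a + c * Var[X; μ] := by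
  have hY : MemLp (fun ω => X ω - μ[X]) 2 μ := hX.sub (memLp_const _)
  have hY_int : Integrable (fun ω => b * (X ω - μ[X])) μ :=
    (hY.integrable one_le_two).const_mul b
  have h_affine : Integrable (fun ω => a + b * (X ω - μ[X])) μ := (integrable_const a).add hY_int
  rw [integral_add h_affine (hY.integrable_sq.const_mul c),
    integral_add (integrable_const a) hY_int, integral_const, integral_const_mul,
    integral_const_mul, integral_sub_integral_eq_zero, variance_eq_integral hX.aemeasurable]
  simp

end

lemma one_sub_mul_mul_add_eq {θ : ℝ} (hθ : θ ≠ 0) (x m : ℝ) :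
    (1 - θ * (x - m)) * (x + 1 / (2 * θ) * ((1 - θ * (x - m)) - 1)) =
      m + (1 / 2 - θ * m) * (x - m) + -(θ / 2) * (x - m) ^ 2 := by
  field_simp
  ring

/-- On the monotone region `G_θ`, the MMV objective evaluated at the measure
    with density `Z = 1 - θ(X - E[X])` equals the MV value:
    `E[Z·(X + (1/(2θ))(Z - 1))] = E[X] - (θ/2) Var(X)`; moreover `Z ≥ 0` a.s.
    and `E[Z] = 1`. -/
theorem mmv_eq_mv_on_monotone_region {Ω : Type*} [MeasurableSpace Ω]
    (μ : Measure Ω) [IsProbabilityMeasure μ]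
    (θ : ℝ) (hθ : 0 < θ) (X : Ω → ℝ) (hX : MemLp X 2 μ)
    (hmono : ∀ᵐ ω ∂μ, X ω - ∫ ω', X ω' ∂μ ≤ 1 / θ) :
    let Z : Ω → ℝ := fun ω => 1 - θ * (X ω - ∫ ω', X ω' ∂μ)
    (∀ᵐ ω ∂μ, 0 ≤ Z ω) ∧ (∫ ω, Z ω ∂μ = 1) ∧
      ∫ ω, Z ω * (X ω + (1 / (2 * θ)) * (Z ω - 1)) ∂μ =
        (∫ ω, X ω ∂μ) - (θ / 2) * variance X μ := by
  intro Z
  refine ⟨?_, ?_, ?_⟩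
  · filter_upwards [hmono] with ω hω
    exact sub_nonneg.mpr ((le_div_iff₀' hθ).mp hω)
  · calc ∫ ω, Z ω ∂μ = ∫ ω, (1 + -θ * (X ω - μ[X]) + 0 * (X ω - μ[X]) ^ 2) ∂μ := by
          congr 1 with ω
          ring
      _ = 1 := by rw [integral_add_mul_centered_add_mul_sq hX]; ring
  · calc ∫ ω, Z ω * (X ω + (1 / (2 * θ)) * (Z ω - 1)) ∂μ
        = ∫ ω, (μ[X] + (1 / 2 - θ * μ[X]) * (X ω - μ[X]) + -(θ / 2) * (X ω - μ[X]) ^ 2) ∂μ := by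
          simp only [Z, one_sub_mul_mul_add_eq hθ.ne']
      _ = μ[X] - (θ / 2) * variance X μ := by
          rw [integral_add_mul_centered_add_mul_sq hX]; ring
end
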